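/- arXiv:2409.01996 — 17 statements merged into one kernel-verified Lean document; each statement's English description precedes it below -/
import Mathlib

section
/- Let F be a field of characteristic ≠ 2, g a Lie algebra over F, κ, λ : g → g linear endomorphisms satisfying condition (kl), and s ∈ g. Then the affine Lie bracket {a,b} := ⁅a,b⁆ + κ(a) + λ(b − a) + s satisfies, for all a, b, c ∈ g, the affine antisymmetry {a,b} − {a,a} + {b,a} = {b,b} and the affine Jacobi identity {a,{b,c}} − {a,{a,a}} + {b,{c,a}} − {b,{b,b}} + {c,{a,b}} − {c,{c,c}} = 0. -/
/-- Theorem 3.1 (first part): given a Lie algebra `g` over a field `F` of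
characteristic `≠ 2`, linear endomorphisms `k`, `l` satisfying condition (kl)
and `s ∈ g`, the affine bracket `{a,b} = ⁅a,b⁆ + k a + l (b - a) + s` satisfies
the affine antisymmetry and the affine Jacobi identity. -/
theorem affine_bracket_antisym_and_jacobi
    {F : Type*} [Field F] (h2 : (2 : F) ≠ 0)
    {g : Type*} [LieRing g] [LieAlgebra F g]
    (k l : g →ₗ[F] g)
    (hkl : ∀ a b : g, l ⁅a, b⁆ = ⁅l a, b⁆ - ⁅a, k b⁆ + ⁅a, l b⁆)
    (s : g) (br : g → g → g)
    (hbr : ∀ a b : g, br a b = ⁅a, b⁆ + k a + l (b - a) + s) :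
    (∀ a b : g, br a b - br a a + br b a = br b b) ∧
    (∀ a b c : g,
      br a (br b c) - br a (br a a) + br b (br c a) - br b (br b b)
        + br c (br a b) - br c (br c c) = 0) := by
  constructor
  · intro a b
    have h : ⁅b, a⁆ = -⁅a, b⁆ := by rw [← lie_skew]
    simp only [hbr, map_sub, h, lie_self]
    abel
  · intro a b c
    have hskew : ∀ x y : g, ⁅l x, y⁆ = -⁅y, l x⁆ := fun x y => by rw [← lie_skew]
    have hkl' : ∀ x y : g, l ⁅x, y⁆ = -⁅y, l x⁆ - ⁅x, k y⁆ + ⁅x, l y⁆ := by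
      intro x y; rw [hkl, hskew]
    have hka : ∀ x : g, ⁅x, k x⁆ = 0 := by
      intro x
      have h := hkl' x x
      simp only [lie_self, map_zero] at h
      have : (0 : g) = -⁅x, k x⁆ := by rw [h]; abel
      rw [eq_comm, neg_eq_zero] at this
      exact this
    have h1 : ⁅b, ⁅c, a⁆⁆ = -⁅a, ⁅b, c⁆⁆ - ⁅c, ⁅a, b⁆⁆ := by
      apply eq_of_sub_eq_zero
      rw [show ⁅b, ⁅c, a⁆⁆ - (-⁅a, ⁅b, c⁆⁆ - ⁅c, ⁅a, b⁆⁆)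
            = ⁅a, ⁅b, c⁆⁆ + ⁅b, ⁅c, a⁆⁆ + ⁅c, ⁅a, b⁆⁆ by abel]
      exact lie_jacobi a b c
    simp only [hbr, map_sub, map_add, hkl', lie_add, add_lie, lie_sub, sub_lie,
      lie_self, sub_self, map_zero, lie_zero, zero_lie, zero_add, add_zero, sub_zero, h1, hka]
    abel
end

section
/- Let F be a field of characteristic ≠ 2, g a Lie algebra over F, κ, λ : g → g arbitrary linear endomorphisms, s ∈ g, and define {a,b} := ⁅a,b⁆ + κ(a) + λ(b − a) + s. If the affine Jacobi identity {a,{b,c}} − {a,{a,a}} + {b,{c,a}} − {b,{b,b}} + {c,{a,b}} − {c,{c,c}} = 0 holds for all a, b, c ∈ g, then (κ, λ) satisfies condition (kl), i.e. λ(⁅a,b⁆) = ⁅λ(a), b⁆ − ⁅a, κ(b)⁆ + ⁅a, λ(b)⁆ for all a, b ∈ g; in particular ⁅a, κ(a)⁆ = 0 for all a ∈ g. -/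
/-- Theorem 3.1 (converse part): if the affine bracket
`{a,b} = ⁅a,b⁆ + k a + l (b - a) + s` satisfies the affine Jacobi identity,
then `(k, l)` satisfies condition (kl); in particular `⁅a, k a⁆ = 0`. -/
theorem affine_jacobi_implies_kl
    {F : Type*} [Field F] (h2 : (2 : F) ≠ 0)
    {g : Type*} [LieRing g] [LieAlgebra F g]
    (k l : g →ₗ[F] g) (s : g) (br : g → g → g)
    (hbr : ∀ a b : g, br a b = ⁅a, b⁆ + k a + l (b - a) + s)
    (hjac : ∀ a b c : g,
      br a (br b c) - br a (br a a) + br b (br c a) - br b (br b b)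
        + br c (br a b) - br c (br c c) = 0) :
    (∀ a b : g, l ⁅a, b⁆ = ⁅l a, b⁆ - ⁅a, k b⁆ + ⁅a, l b⁆) ∧
    (∀ a : g, ⁅a, k a⁆ = 0) := by
  have haa : ∀ a : g, ⁅a, k a⁆ = 0 := by
    intro a
    have h := hjac a a 0
    simp only [hbr, lie_add, add_lie, lie_sub, sub_lie, map_add, map_sub, map_zero,
      lie_zero, zero_lie, lie_self, sub_self, zero_sub, zero_add, add_zero, lie_neg,
      neg_lie, map_neg] at h
    abel_nf at h
    rwa [neg_smul, one_smul, neg_eq_zero] at h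
  refine ⟨fun a b => ?_, haa⟩
  have h := hjac a b 0
  simp only [hbr, lie_add, add_lie, lie_sub, sub_lie, map_add, map_sub, map_zero,
    lie_zero, zero_lie, lie_self, sub_self, zero_sub, zero_add, add_zero, lie_neg,
    neg_lie, map_neg, haa] at h
  abel_nf at h
  rw [← lie_skew b (l a)] at h
  rw [← sub_eq_zero, ← h]
  abel
end

section
/- Let V be a vector space over a field F of characteristic ≠ 2, B : V → V → V a bilinear map, φ, ψ : V → V linear maps, s ∈ V, and define the bi-affine bracket f(a,b) := B(a,b) + φ(a) + ψ(b) + s. Assume that f satisfies the affine antisymmetry f(a,b) − f(a,a) + f(b,a) = f(b,b) for all a, b ∈ V and the affine Jacobi identity f(a,f(b,c)) − f(a,f(a,a)) + f(b,f(c,a)) − f(b,f(b,b)) + f(c,f(a,b)) − f(c,f(c,c)) = 0 for all a, b, c ∈ V. Then the bracket [a,b] := f(a,b) − f(a,0) − f(0,b) + f(0,0) is a Lie bracket on V: it is bilinear, satisfies [a,a] = 0 for all a ∈ V, and satisfies the Jacobi identity [a,[b,c]] + [b,[c,a]] + [c,[a,b]] = 0 for all a, b, c ∈ V. -/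
/-- Theorem 2.6 (tangent Lie algebra): if a bi-affine bracket
`f a b = B a b + φ a + ψ b + s` on a vector space `V` satisfies the affine
antisymmetry and the affine Jacobi identity, then the linearised bracket
`[a,b] = f a b - f a 0 - f 0 b + f 0 0` is a Lie bracket on `V`. -/
theorem tangent_bracket_is_lie_bracket
    {F : Type*} [Field F] (h2 : (2 : F) ≠ 0)
    {V : Type*} [AddCommGroup V] [Module F V]
    (B : V →ₗ[F] V →ₗ[F] V) (φ ψ : V →ₗ[F] V) (s : V)
    (f : V → V → V) (hf : ∀ a b : V, f a b = B a b + φ a + ψ b + s)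
    (hanti : ∀ a b : V, f a b - f a a + f b a = f b b)
    (hjac : ∀ a b c : V,
      f a (f b c) - f a (f a a) + f b (f c a) - f b (f b b)
        + f c (f a b) - f c (f c c) = 0)
    (br : V → V → V)
    (hbr : ∀ a b : V, br a b = f a b - f a 0 - f 0 b + f 0 0) :
    (∀ a a' b : V, br (a + a') b = br a b + br a' b) ∧
    (∀ (r : F) (a b : V), br (r • a) b = r • br a b) ∧
    (∀ a b b' : V, br a (b + b') = br a b + br a b') ∧
    (∀ (r : F) (a b : V), br a (r • b) = r • br a b) ∧
    (∀ a : V, br a a = 0) ∧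
    (∀ a b c : V, br a (br b c) + br b (br c a) + br c (br a b) = 0) := by
  -- the linearised bracket is exactly the bilinear part
  have hB : ∀ a b : V, br a b = B a b := by
    intro a b
    simp [hbr, hf]
    abel
  -- affine antisymmetry forces the bilinear part to be alternating
  have hBa : ∀ a : V, B a a = 0 := by
    intro a
    have h := hanti a 0
    simp only [hf, map_zero, LinearMap.zero_apply] at h
    have : -(B a a) = 0 := by linear_combination (norm := module) h
    simpa [neg_eq_zero] using this
  have h4 : (4 : F) ≠ 0 := by
    intro h
    apply h2
    have : (4 : F) = 2 * 2 := by norm_num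
    rw [this] at h
    rcases mul_eq_zero.mp h with h | h <;> exact h
  refine ⟨?_, ?_, ?_, ?_, ?_, ?_⟩
  · intro a a' b; simp [hB, map_add]
  · intro r a b; simp [hB, map_smul]
  · intro a b b'; simp [hB, map_add]
  · intro r a b; simp [hB, map_smul]
  · intro a; simp [hB, hBa]
  · intro a b c
    simp only [hB]
    have h1 := hjac a b c
    have h2' := hjac ((2:F) • a) ((2:F) • b) ((2:F) • c)
    simp only [hf, map_add, map_smul, LinearMap.add_apply, LinearMap.smul_apply,
      smul_add, smul_smul, hBa, smul_zero, add_zero, zero_add] at h1 h2'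
    -- scaling trick: compare the Jacobi identity at (a,b,c) and (2a,2b,2c)
    have key : (4 : F) • (B a (B b c) + B b (B c a) + B c (B a b)) = 0 := by
      linear_combination (norm := module) h2' - (4:F) • h1
    exact (smul_eq_zero.mp key).resolve_left h4
end

section
/- Let g be a Lie algebra over a field F of characteristic ≠ 2 and let λ, δ : g → g be linear maps such that ⁅δ(a), b⁆ + ⁅a, λ(b)⁆ = λ(⁅a,b⁆) for all a, b ∈ g. Set κ := λ − δ. Then for every positive integer n, the n-th iterate κⁿ belongs to the quasicentroid of g, that is, ⁅κⁿ(a), b⁆ = ⁅a, κⁿ(b)⁆ for all a, b ∈ g. -/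
/-- Lemma 3.2(2)(i): if `(d, l, l)` is a generalised derivation of `g` and
`k := l - d`, then every positive power `k ^ n` belongs to the quasicentroid
of `g`. -/
theorem pow_mem_quasicentroid
    {F : Type*} [Field F] (h2 : (2 : F) ≠ 0)
    {g : Type*} [LieRing g] [LieAlgebra F g]
    (l d : Module.End F g)
    (hgen : ∀ a b : g, ⁅d a, b⁆ + ⁅a, l b⁆ = l ⁅a, b⁆)
    (k : Module.End F g) (hk : k = l - d) :
    ∀ n : ℕ, 0 < n → ∀ a b : g, ⁅(k ^ n) a, b⁆ = ⁅a, (k ^ n) b⁆ := by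
  have base : ∀ a b : g, ⁅k a, b⁆ = ⁅a, k b⁆ := by
    intro a b
    have h1 := hgen a b
    have h2' := hgen b a
    have hanti : l ⁅b, a⁆ = - l ⁅a, b⁆ := by
      rw [(lie_skew b a).symm, map_neg]
    rw [hanti] at h2'
    have hsum : ⁅d a, b⁆ + ⁅a, l b⁆ + (⁅d b, a⁆ + ⁅b, l a⁆) = 0 := by
      rw [h1, h2']; abel
    have e1 : ⁅d b, a⁆ = -⁅a, d b⁆ := by rw [← lie_skew a (d b), neg_neg]
    have e2 : ⁅b, l a⁆ = -⁅l a, b⁆ := by rw [← lie_skew (l a) b, neg_neg]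
    rw [e1, e2] at hsum
    have key : ⁅a, l b - d b⁆ = ⁅l a - d a, b⁆ := by
      rw [lie_sub, sub_lie]
      linear_combination (norm := abel) hsum
    simpa [hk] using key.symm
  intro n
  induction n with
  | zero => intro hn; exact absurd hn (lt_irrefl 0)
  | succ m ih =>
    intro _ a b
    rcases Nat.eq_zero_or_pos m with hm | hm
    · subst hm; simpa using base a b
    · calc ⁅(k ^ (m+1)) a, b⁆ = ⁅(k ^ m) (k a), b⁆ := by
            rw [pow_succ, Module.End.mul_apply]
        _ = ⁅k a, (k ^ m) b⁆ := ih hm (k a) b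
        _ = ⁅a, k ((k ^ m) b)⁆ := base a _
        _ = ⁅a, (k ^ (m+1)) b⁆ := by rw [pow_succ', Module.End.mul_apply]
end

section
/- Let g be a Lie algebra over a field F of characteristic ≠ 2 and let λ, δ : g → g be linear maps such that ⁅δ(a), b⁆ + ⁅a, λ(b)⁆ = λ(⁅a,b⁆) for all a, b ∈ g. Set κ := λ − δ. Then for every a ∈ g, the linear span of the set {κⁿ(a) : n ∈ ℕ} is an abelian Lie subalgebra of g; in particular ⁅x, y⁆ = 0 for all x, y in this span. -/
/-- Lemma 3.2(2)(ii): if `(d, l, l)` is a generalised derivation of `g` and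
`k := l - d`, then for every `a ∈ g` the linear span of `{k ^ n a : n ∈ ℕ}`
is an abelian Lie subalgebra: the bracket of any two of its elements vanishes. -/
theorem span_pow_orbit_abelian
    {F : Type*} [Field F] (h2 : (2 : F) ≠ 0)
    {g : Type*} [LieRing g] [LieAlgebra F g]
    (l d : Module.End F g)
    (hgen : ∀ a b : g, ⁅d a, b⁆ + ⁅a, l b⁆ = l ⁅a, b⁆)
    (k : Module.End F g) (hk : k = l - d) :
    ∀ a : g, ∀ x ∈ Submodule.span F (Set.range fun n : ℕ => (k ^ n) a),
      ∀ y ∈ Submodule.span F (Set.range fun n : ℕ => (k ^ n) a),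
        ⁅x, y⁆ = 0 := by
  -- key identity: ⁅k a, b⁆ = ⁅a, k b⁆
  have hkey : ∀ a b : g, ⁅k a, b⁆ = ⁅a, k b⁆ := by
    intro a b
    have h1 := hgen a b
    have h2' := hgen b a
    have h2'' : -⁅a, d b⁆ + -⁅l a, b⁆ = -l ⁅a, b⁆ := by
      rw [← lie_skew (d b) a, ← lie_skew b (l a), ← lie_skew b a, map_neg] at h2'
      linear_combination (norm := module) h2'
    have : ⁅d a, b⁆ + ⁅a, l b⁆ - ⁅a, d b⁆ - ⁅l a, b⁆ = 0 := by
      linear_combination (norm := module) h1 + h2''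
    simp only [hk, LinearMap.sub_apply, sub_lie, lie_sub]
    linear_combination (norm := module) -this
  have hpow : ∀ n : ℕ, ∀ a b : g, ⁅(k ^ n) a, b⁆ = ⁅a, (k ^ n) b⁆ := by
    intro n
    induction n with
    | zero => simp
    | succ m ih =>
      intro a b
      have h1 : (k ^ (m + 1)) a = (k ^ m) (k a) := by
        rw [pow_succ, Module.End.mul_apply]
      have h2' : (k ^ (m + 1)) b = k ((k ^ m) b) := by
        rw [pow_succ', Module.End.mul_apply]
      rw [h1, ih (k a) b, hkey, ← h2']
  intro a
  -- bracket of two generators vanishes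
  have hgen0 : ∀ n m : ℕ, ⁅(k ^ n) a, (k ^ m) a⁆ = 0 := by
    intro n m
    have e1 : ⁅(k ^ n) a, (k ^ m) a⁆ = ⁅a, (k ^ (n + m)) a⁆ := by
      rw [hpow n a ((k ^ m) a), ← LinearMap.comp_apply, ← Module.End.mul_eq_comp,
        ← pow_add]
    have e2 : ⁅(k ^ n) a, (k ^ m) a⁆ = ⁅(k ^ (n + m)) a, a⁆ := by
      rw [← hpow m ((k ^ n) a) a, ← LinearMap.comp_apply, ← Module.End.mul_eq_comp,
        ← pow_add, add_comm n m]
    have hsum : ⁅(k ^ n) a, (k ^ m) a⁆ + ⁅(k ^ n) a, (k ^ m) a⁆ = 0 := by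
      nth_rewrite 1 [e1]
      rw [e2, ← lie_skew a ((k ^ (n + m)) a)]
      abel
    have h2s : (2 : F) • ⁅(k ^ n) a, (k ^ m) a⁆ = 0 := by
      rw [two_smul]; exact hsum
    rcases smul_eq_zero.mp h2s with h | h
    · exact absurd h h2
    · exact h
  intro x hx y hy
  induction hx using Submodule.span_induction with
  | mem x hxm =>
    induction hy using Submodule.span_induction with
    | mem y hym =>
      obtain ⟨n, rfl⟩ := hxm
      obtain ⟨m, rfl⟩ := hym
      exact hgen0 n m
    | zero => simp
    | add y z _ _ hy1 hz1 => rw [lie_add, hy1, hz1, add_zero]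
    | smul c y _ hy1 => rw [lie_smul, hy1, smul_zero]
  | zero => simp
  | add u v _ _ hu hv => rw [add_lie, hu, hv, add_zero]
  | smul c u _ hu => rw [smul_lie, hu, smul_zero]
end

section
/- Let g be a Lie algebra over a field F of characteristic ≠ 2 and let λ, δ : g → g be linear maps such that ⁅δ(a), b⁆ + ⁅a, λ(b)⁆ = λ(⁅a,b⁆) for all a, b ∈ g. Set κ := λ − δ. Then δ is a derivation of g (i.e. δ(⁅a,b⁆) = ⁅δ(a), b⁆ + ⁅a, δ(b)⁆ for all a, b ∈ g) if and only if κ belongs to the centroid of g (i.e. κ(⁅a,b⁆) = ⁅κ(a), b⁆ = ⁅a, κ(b)⁆ for all a, b ∈ g). -/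
/-- Lemma 3.2(2)(iii): if `(d, l, l)` is a generalised derivation of `g` and
`k := l - d`, then `d` is a derivation if and only if `k` belongs to the
centroid of `g`. -/
theorem derivation_iff_centroid
    {F : Type*} [Field F] (h2 : (2 : F) ≠ 0)
    {g : Type*} [LieRing g] [LieAlgebra F g]
    (l d : g →ₗ[F] g)
    (hgen : ∀ a b : g, ⁅d a, b⁆ + ⁅a, l b⁆ = l ⁅a, b⁆)
    (k : g →ₗ[F] g) (hk : k = l - d) :
    (∀ a b : g, d ⁅a, b⁆ = ⁅d a, b⁆ + ⁅a, d b⁆) ↔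
    (∀ a b : g, k ⁅a, b⁆ = ⁅k a, b⁆ ∧ k ⁅a, b⁆ = ⁅a, k b⁆) := by
  subst hk
  have key : ∀ a b : g, l ⁅a, b⁆ = ⁅l a, b⁆ + ⁅a, d b⁆ := by
    intro a b
    have h := hgen b a
    have h' : ⁅a, b⁆ = -⁅b, a⁆ := (lie_skew a b).symm
    rw [h', map_neg, ← h]
    rw [← lie_skew (l a) b, ← lie_skew a (d b)]
    abel
  constructor
  · intro hd a b
    simp only [LinearMap.sub_apply]
    constructor
    · rw [key a b, hd a b, sub_lie]; abel
    · rw [← hgen a b, hd a b, lie_sub]; abel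
  · intro hc a b
    have h1 := (hc a b).1
    have h2' := (hc a b).2
    simp only [LinearMap.sub_apply] at h1 h2'
    rw [lie_sub] at h2'
    calc d ⁅a, b⁆ = l ⁅a, b⁆ - (l ⁅a, b⁆ - d ⁅a, b⁆) := by abel
      _ = (⁅d a, b⁆ + ⁅a, l b⁆) - (⁅a, l b⁆ - ⁅a, d b⁆) := by rw [hgen a b, h2']
      _ = ⁅d a, b⁆ + ⁅a, d b⁆ := by abel
end

section
/- Let F be a field of characteristic ≠ 2, let g and g' be Lie algebras over F, let κ, λ : g → g and κ', λ' : g' → g' be linear maps satisfying condition (kl) on g and g' respectively, and let s ∈ g, s' ∈ g'. Denote by {a,b} := ⁅a,b⁆ + κ(a) + λ(b − a) + s and {x,y}' := ⁅x,y⁆ + κ'(x) + λ'(y − x) + s' the associated affine Lie brackets. Let ψ : g → g' be a linear map, q' ∈ g', and define φ : g → g' by φ(a) = ψ(a) + q'. Then φ({a,b}) = {φ(a), φ(b)}' for all a, b ∈ g if and only if ψ is a homomorphism of Lie algebras (ψ(⁅a,b⁆) = ⁅ψ(a), ψ(b)⁆ for all a, b) and the following three conditions hold: ψ ∘ κ =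 κ' ∘ ψ; ψ(λ(a)) = ⁅q', ψ(a)⁆ + λ'(ψ(a)) for all a ∈ g; and ψ(s) = s' − q' + κ'(q'). -/
/-- Theorem 3.6: a map `φ = ψ + q'` (with `ψ` linear) between Lie affgebras
`a(g; k, l, s)` and `a(g'; k', l', s')` is a homomorphism of Lie affgebras if
and only if `ψ` is a Lie algebra homomorphism intertwining `k` with `k'`,
intertwining `l` with `ad_{q'} + l'`, and `ψ s = s' - q' + k' q'`. -/
theorem affgebra_hom_characterisation
    {F : Type*} [Field F] (h2 : (2 : F) ≠ 0)
    {g : Type*} [LieRing g] [LieAlgebra F g]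
    {g' : Type*} [LieRing g'] [LieAlgebra F g']
    (k l : g →ₗ[F] g) (k' l' : g' →ₗ[F] g')
    (hkl : ∀ a b : g, l ⁅a, b⁆ = ⁅l a, b⁆ - ⁅a, k b⁆ + ⁅a, l b⁆)
    (hkl' : ∀ x y : g', l' ⁅x, y⁆ = ⁅l' x, y⁆ - ⁅x, k' y⁆ + ⁅x, l' y⁆)
    (s : g) (s' : g')
    (br : g → g → g)
    (hbr : ∀ a b : g, br a b = ⁅a, b⁆ + k a + l (b - a) + s)
    (br' : g' → g' → g')
    (hbr' : ∀ x y : g', br' x y = ⁅x, y⁆ + k' x + l' (y - x) + s')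
    (ψ : g →ₗ[F] g') (q' : g') (φ : g → g')
    (hφ : ∀ a : g, φ a = ψ a + q') :
    (∀ a b : g, φ (br a b) = br' (φ a) (φ b)) ↔
      ((∀ a b : g, ψ ⁅a, b⁆ = ⁅ψ a, ψ b⁆) ∧
       (∀ a : g, ψ (k a) = k' (ψ a)) ∧
       (∀ a : g, ψ (l a) = ⁅q', ψ a⁆ + l' (ψ a)) ∧
       ψ s = s' - q' + k' q') := by
  have hsk : ∀ x : g', ⁅x, q'⁆ + ⁅q', x⁆ = 0 := by
    intro x; rw [← lie_skew]; abel
  constructor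
  · intro h
    have hE : ∀ a b : g, ψ ⁅a, b⁆ + ψ (k a) + (ψ (l b) - ψ (l a)) + ψ s + q'
        = (⁅ψ a, ψ b⁆ + ⁅ψ a, q'⁆ + ⁅q', ψ b⁆) + (k' (ψ a) + k' q')
          + (l' (ψ b) - l' (ψ a)) + s' := by
      intro a b
      have H := h a b
      simp only [hbr, hbr', hφ, map_add, map_sub, add_lie, lie_add,
        add_sub_add_right_eq_sub, lie_self, add_zero] at H
      abel_nf at H ⊢
      exact H
    have h4 : ψ s = s' - q' + k' q' := by
      have H := hE 0 0
      simp only [lie_zero, zero_lie, map_zero, sub_self, add_zero, zero_add,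
        zero_sub, neg_zero] at H
      linear_combination (norm := abel1) H
    have hk : ∀ a : g, ψ (k a) = k' (ψ a) := by
      intro a
      have H := hE a a
      simp only [lie_self, map_zero, sub_self, zero_add, add_zero] at H
      linear_combination (norm := abel1) H - h4 + hsk (ψ a)
    have hl : ∀ a : g, ψ (l a) = ⁅q', ψ a⁆ + l' (ψ a) := by
      intro a
      have H := hE 0 a
      simp only [lie_zero, zero_lie, map_zero, sub_zero, zero_sub, zero_add,
        add_zero, neg_zero] at H
      linear_combination (norm := abel1) H - h4
    refine ⟨?_, hk, hl, h4⟩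
    intro a b
    linear_combination (norm := abel1)
      hE a b - hk a - hl b + hl a - h4 + hsk (ψ a)
  · rintro ⟨h1, hk, hl, h4⟩ a b
    simp only [hbr, hbr', hφ, map_add, map_sub, add_lie, lie_add, lie_self,
      h1, hk, hl, h4]
    linear_combination (norm := abel1) -hsk (ψ a)
end

section
/- Let F be a field of characteristic ≠ 2, let g and g' be Lie algebras over F, let κ, λ : g → g and κ', λ' : g' → g' be linear maps satisfying condition (kl) on g and g' respectively, and let s ∈ g, s' ∈ g', with associated affine Lie brackets {a,b} := ⁅a,b⁆ + κ(a) + λ(b − a) + s on g and {x,y}' := ⁅x,y⁆ + κ'(x) + λ'(y − x) + s' on g'. Then there exists a bijection φ : g → g' of the form φ(a) = ψ(a) + c with ψ : g → g' linear and c ∈ g', satisfying φ({a,b}) = {φ(a), φ(b)}' for all a, b ∈ g, if and only if there exist an isomorphism of Lie algebras Ψ : g → g' and an element q ∈ g such that: κ' ∘ Ψ = Ψ ∘ κ; λ'(Ψ(x)) = Ψ(λ(x) − ⁅q, x⁆) for all x ∈ g; and s' = Ψ(s + q − κ(q)). -/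
/-- Corollary 3.7: the Lie affgebras `a(g; k, l, s)` and `a(g'; k', l', s')`
are isomorphic if and only if there exist a Lie algebra isomorphism
`Ψ : g → g'` and an element `q ∈ g` such that `k' = Ψ k Ψ⁻¹`,
`l' = Ψ (l - ad_q) Ψ⁻¹`, and `s' = Ψ (s + q - k q)`. -/
theorem affgebra_iso_characterisation
    {F : Type*} [Field F] (h2 : (2 : F) ≠ 0)
    {g : Type*} [LieRing g] [LieAlgebra F g]
    {g' : Type*} [LieRing g'] [LieAlgebra F g']
    (k l : g →ₗ[F] g) (k' l' : g' →ₗ[F] g')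
    (hkl : ∀ a b : g, l ⁅a, b⁆ = ⁅l a, b⁆ - ⁅a, k b⁆ + ⁅a, l b⁆)
    (hkl' : ∀ x y : g', l' ⁅x, y⁆ = ⁅l' x, y⁆ - ⁅x, k' y⁆ + ⁅x, l' y⁆)
    (s : g) (s' : g')
    (br : g → g → g)
    (hbr : ∀ a b : g, br a b = ⁅a, b⁆ + k a + l (b - a) + s)
    (br' : g' → g' → g')
    (hbr' : ∀ x y : g', br' x y = ⁅x, y⁆ + k' x + l' (y - x) + s') :
    (∃ (ψ : g →ₗ[F] g') (c : g'),
        Function.Bijective (fun a : g => ψ a + c) ∧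
        ∀ a b : g, ψ (br a b) + c = br' (ψ a + c) (ψ b + c)) ↔
    (∃ (Ψ : g ≃ₗ⁅F⁆ g') (q : g),
        (∀ x : g, k' (Ψ x) = Ψ (k x)) ∧
        (∀ x : g, l' (Ψ x) = Ψ (l x - ⁅q, x⁆)) ∧
        s' = Ψ (s + q - k q)) := by
  constructor
  · rintro ⟨ψ, c, hbij, heq⟩
    have key : ∀ a b : g, ψ ⁅a, b⁆ + ψ (k a) + (ψ (l b) - ψ (l a)) + ψ s + c =
        ⁅ψ a, ψ b⁆ + ⁅ψ a, c⁆ + ⁅c, ψ b⁆ + k' (ψ a) + k' c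
          + (l' (ψ b) - l' (ψ a)) + s' := by
      intro a b
      have h := heq a b
      rw [hbr, hbr'] at h
      simp only [map_add, map_sub, lie_add, add_lie, lie_self,
        add_sub_add_right_eq_sub, add_zero] at h
      linear_combination (norm := abel) h
    have hE0 : ψ s + c = k' c + s' := by
      have h := key 0 0
      simpa using h
    have hK : ∀ a : g, k' (ψ a) = ψ (k a) := by
      intro a
      have h := key a a
      simp only [lie_self, map_zero, sub_self, add_zero, zero_add] at h
      linear_combination (norm := abel) -h + hE0 + lie_skew (ψ a) c
    have hL : ∀ b : g, ψ (l b) = ⁅c, ψ b⁆ + l' (ψ b) := by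
      intro b
      have h := key 0 b
      simp only [zero_lie, lie_zero, map_zero, zero_add, sub_zero, zero_sub,
        add_zero] at h
      linear_combination (norm := abel) h - hE0
    have hLie : ∀ a b : g, ψ ⁅a, b⁆ = ⁅ψ a, ψ b⁆ := by
      intro a b
      linear_combination (norm := abel) key a b - hE0 + hK a - hL b + hL a
        - lie_skew (ψ a) c
    have hψ : Function.Bijective ψ := by
      have h := (Equiv.subRight c).bijective.comp hbij
      have : ((Equiv.subRight c) ∘ fun a : g => ψ a + c) = ψ := by
        funext a; simp
      rwa [this] at h
    let ψh : g →ₗ⁅F⁆ g' := { toLinearMap := ψ, map_lie' := fun {x y} => hLie x y }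
    let Ψ : g ≃ₗ⁅F⁆ g' := LieEquiv.ofBijective ψh hψ
    have hΨ : ∀ x, Ψ x = ψ x := fun x => rfl
    obtain ⟨q, hq⟩ := hψ.2 c
    refine ⟨Ψ, q, fun x => ?_, fun x => ?_, ?_⟩
    · rw [hΨ, hΨ]; exact hK x
    · rw [hΨ, hΨ, map_sub, hLie q x, hq]
      linear_combination (norm := abel) -hL x
    · rw [hΨ]
      simp only [map_add, map_sub]
      rw [← hK q, hq]
      linear_combination (norm := abel) -hE0
  · rintro ⟨Ψ, q, hk, hl, hs⟩
    refine ⟨Ψ.toLinearEquiv.toLinearMap, Ψ q,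
      (Ψ.toLinearEquiv.toEquiv.trans (Equiv.addRight (Ψ q))).bijective, ?_⟩
    intro a b
    have hml : ∀ x y : g, Ψ ⁅x, y⁆ = ⁅Ψ x, Ψ y⁆ := fun x y => Ψ.map_lie x y
    have hco : ∀ x : g, Ψ.toLinearEquiv.toLinearMap x = Ψ x := fun x => rfl
    have hadd : ∀ x y : g, Ψ (x + y) = Ψ x + Ψ y := fun x y =>
      Ψ.toLinearEquiv.map_add x y
    have hsub : ∀ x y : g, Ψ (x - y) = Ψ x - Ψ y := fun x y =>
      Ψ.toLinearEquiv.map_sub x y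
    simp only [hco]
    rw [hbr, hbr']
    rw [show (Ψ b + Ψ q) - (Ψ a + Ψ q) = Ψ (b - a) by rw [hsub]; abel]
    rw [hl (b - a)]
    simp only [map_add, hadd, hsub, hml, lie_add, add_lie, lie_sub, sub_lie,
      lie_self, hk, hs]
    linear_combination (norm := abel) lie_skew (Ψ a) (Ψ q)
end

section
/- Let F be a field of characteristic ≠ 2, let g and g' be Lie algebras over F, let κ, λ : g → g and κ', λ' : g' → g' be linear maps satisfying condition (kl), and let s ∈ g, s' ∈ g', with associated affine Lie brackets {a,b} := ⁅a,b⁆ + κ(a) + λ(b − a) + s on g and {x,y}' := ⁅x,y⁆ + κ'(x) + λ'(y − x) + s' on g'. If there exists a bijection φ : g → g' of the form φ(a) = ψ(a) + c with ψ : g → g' linear and c ∈ g', such that φ({a,b}) = {φ(a), φ(b)}' for all a, b ∈ g, then g and g' are isomorphic as Lie algebras. -/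
/-- Corollary 3.8 (contrapositive form): if the Lie affgebras `a(g; k, l, s)`
and `a(g'; k', l', s')` are isomorphic (via an affine bijection), then the
fibres `g` and `g'` are isomorphic as Lie algebras. -/
theorem affgebra_iso_implies_fibre_iso
    {F : Type*} [Field F] (h2 : (2 : F) ≠ 0)
    {g : Type*} [LieRing g] [LieAlgebra F g]
    {g' : Type*} [LieRing g'] [LieAlgebra F g']
    (k l : g →ₗ[F] g) (k' l' : g' →ₗ[F] g')
    (hkl : ∀ a b : g, l ⁅a, b⁆ = ⁅l a, b⁆ - ⁅a, k b⁆ + ⁅a, l b⁆)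
    (hkl' : ∀ x y : g', l' ⁅x, y⁆ = ⁅l' x, y⁆ - ⁅x, k' y⁆ + ⁅x, l' y⁆)
    (s : g) (s' : g')
    (br : g → g → g)
    (hbr : ∀ a b : g, br a b = ⁅a, b⁆ + k a + l (b - a) + s)
    (br' : g' → g' → g')
    (hbr' : ∀ x y : g', br' x y = ⁅x, y⁆ + k' x + l' (y - x) + s')
    (ψ : g →ₗ[F] g') (c : g')
    (hbij : Function.Bijective (fun a : g => ψ a + c))
    (hhom : ∀ a b : g, ψ (br a b) + c = br' (ψ a + c) (ψ b + c)) :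
    Nonempty (g ≃ₗ⁅F⁆ g') := by
  -- main identity from the affgebra morphism property
  have h1 : ∀ a b : g, ψ ⁅a, b⁆ + ψ (k a) + ψ (l (b - a)) + ψ s + c =
      ⁅ψ a + c, ψ b + c⁆ + k' (ψ a + c) + l' (ψ b - ψ a) + s' := by
    intro a b
    have := hhom a b
    rw [hbr, hbr'] at this
    simpa [map_add, map_sub, add_sub_add_right_eq_sub, add_assoc] using this
  -- diagonal case
  have hd : ∀ a : g, ψ (k a) + ψ s + c = k' (ψ a + c) + s' := by
    intro a
    have := h1 a a
    simpa using this
  have hd' : ∀ a : g, k' (ψ a + c) = ψ (k a) + ψ s + c - s' := by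
    intro a; rw [eq_sub_iff_add_eq]; exact (hd a).symm
  -- a = 0 case gives a formula for ψ ∘ l
  have h0 : ∀ x : g, ψ (l x) = ⁅c, ψ x⁆ + l' (ψ x) := by
    intro x
    have e1 := h1 0 x
    have e2 := hd' 0
    simp only [map_zero, zero_add, sub_zero, lie_self] at e1 e2
    rw [e2] at e1
    simp only [zero_lie, map_zero, lie_add, lie_self, add_zero, zero_add] at e1
    linear_combination (norm := abel) e1
  -- ψ is a Lie algebra map
  have key : ∀ a b : g, ψ ⁅a, b⁆ = ⁅ψ a, ψ b⁆ := by
    intro a b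
    have e1 := h1 a b
    rw [h0 (b - a), hd' a] at e1
    simp only [map_sub, lie_sub, add_lie, lie_add, lie_self, add_zero, zero_add] at e1
    have hsk : (⁅ψ a, c⁆ : g') = -⁅c, ψ a⁆ := by rw [← lie_skew]
    rw [hsk] at e1
    linear_combination (norm := abel) e1
  -- ψ is bijective
  have hψ : Function.Bijective ψ := by
    have : ⇑ψ = (Equiv.subRight c) ∘ (fun a : g => ψ a + c) := by
      funext a; simp
    rw [this]
    exact (Equiv.subRight c).bijective.comp hbij
  exact ⟨{ LinearEquiv.ofBijective ψ hψ with map_lie' := fun {a b} => key a b }⟩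
end

section
/- Let F be a field of characteristic ≠ 2, let g be a simple Lie algebra over F and g' any Lie algebra over F, let κ, λ : g → g and κ', λ' : g' → g' be linear maps satisfying condition (kl), and let s ∈ g, s' ∈ g', with associated affine Lie brackets {a,b} := ⁅a,b⁆ + κ(a) + λ(b − a) + s on g and {x,y}' := ⁅x,y⁆ + κ'(x) + λ'(y − x) + s' on g'. Then every map φ : g → g' of the form φ(a) = ψ(a) + c with ψ : g → g' linear and c ∈ g', satisfying φ({a,b}) = {φ(a), φ(b)}' for all a, b ∈ g, is either a constant function or injective. -/
/-!
The linear part `ψ` of a bracket-preserving affine map is a Lie algebra homomorphism: in the mixed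
second difference `{a,b} - {a,0} - {0,b} + {0,0} = ⁅a,b⁆` the terms in `κ`, `λ` and `s` cancel,
and `φ` carries second differences to second differences of `ψ`. The kernel of `ψ` is an ideal of
the simple Lie algebra `g`, so `ψ` is injective or zero, and `φ = ψ + c` is injective or constant.
-/

section AffineBracket

variable {R L : Type*} [Semiring R] [LieRing L] [Module R L]

def affineBracket (k l : L →ₗ[R] L) (s a b : L) : L :=
  ⁅a, b⁆ + k a + l (b - a) + s

theorem affineBracket_sub_sub_add (k l : L →ₗ[R] L) (s a b c d : L) :
    affineBracket k l s a b - affineBracket k l s a d - affineBracket k l s c b +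
      affineBracket k l s c d = ⁅a - c, b - d⁆ := by
  simp only [affineBracket, map_sub, sub_lie, lie_sub]
  abel

variable {L' : Type*} [LieRing L'] [Module R L']

theorem LinearMap.map_lie_of_map_affineBracket {k l : L →ₗ[R] L} {k' l' : L' →ₗ[R] L'}
    {s : L} {s' : L'} {ψ : L →ₗ[R] L'} {c : L'}
    (h : ∀ a b, ψ (affineBracket k l s a b) + c = affineBracket k' l' s' (ψ a + c) (ψ b + c))
    (a b : L) : ψ ⁅a, b⁆ = ⁅ψ a, ψ b⁆ := by
  set B := affineBracket k l s
  set B' := affineBracket k' l' s'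
  calc ψ ⁅a, b⁆ = ψ (B a b - B a 0 - B 0 b + B 0 0) := by
        rw [affineBracket_sub_sub_add, sub_zero, sub_zero]
    _ = (ψ (B a b) + c) - (ψ (B a 0) + c) - (ψ (B 0 b) + c) + (ψ (B 0 0) + c) := by
        simp only [map_add, map_sub]
        abel
    _ = B' (ψ a + c) (ψ b + c) - B' (ψ a + c) (ψ 0 + c) - B' (ψ 0 + c) (ψ b + c) +
          B' (ψ 0 + c) (ψ 0 + c) := by
        rw [h, h, h, h]
    _ = ⁅ψ a, ψ b⁆ := by
        rw [affineBracket_sub_sub_add, map_zero, zero_add, add_sub_cancel_right,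
          add_sub_cancel_right]

end AffineBracket

theorem LieAlgebra.IsSimple.injective_or_eq_zero {R L L' : Type*} [CommRing R] [LieRing L]
    [LieAlgebra R L] [LieAlgebra.IsSimple R L] [LieRing L'] [LieAlgebra R L']
    (f : L →ₗ⁅R⁆ L') : Function.Injective f ∨ f = 0 := by
  refine (IsSimple.eq_bot_or_eq_top f.ker).imp f.ker_eq_bot.mp fun h => ?_
  ext a
  exact f.mem_ker.mp (h ▸ LieSubmodule.mem_top a)

theorem simple_fibre_affgebra_hom_const_or_injective_general
    {F : Type*} [Field F]
    {g : Type*} [LieRing g] [LieAlgebra F g] [LieAlgebra.IsSimple F g]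
    {g' : Type*} [LieRing g'] [LieAlgebra F g']
    (k l : g →ₗ[F] g) (k' l' : g' →ₗ[F] g')
    (s : g) (s' : g')
    (br : g → g → g)
    (hbr : ∀ a b : g, br a b = ⁅a, b⁆ + k a + l (b - a) + s)
    (br' : g' → g' → g')
    (hbr' : ∀ x y : g', br' x y = ⁅x, y⁆ + k' x + l' (y - x) + s')
    (ψ : g →ₗ[F] g') (c : g') (φ : g → g')
    (hφ : ∀ a : g, φ a = ψ a + c)
    (hhom : ∀ a b : g, φ (br a b) = br' (φ a) (φ b)) :
    (∃ y : g', ∀ a : g, φ a = y) ∨ Function.Injective φ := by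
  have hψ : ∀ a b, ψ ⁅a, b⁆ = ⁅ψ a, ψ b⁆ :=
    LinearMap.map_lie_of_map_affineBracket fun a b => by
      simpa only [affineBracket, hφ, hbr, hbr'] using hhom a b
  have hφψ : φ = (· + c) ∘ ψ := funext hφ
  rcases LieAlgebra.IsSimple.injective_or_eq_zero { ψ with map_lie' := hψ _ _ } with hinj | hzero
  · exact Or.inr (hφψ ▸ (add_left_injective c).comp hinj)
  · exact Or.inl ⟨c, fun a => by rw [hφ, show ψ a = 0 from LieHom.congr_fun hzero a, zero_add]⟩

/-- Corollary 3.9: if `g` is a simple Lie algebra, then any homomorphism of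
Lie affgebras from `a(g; k, l, s)` (an affine map preserving the brackets) is
either constant or injective, i.e. `a(g; k, l, s)` is a simple Lie affgebra. -/
theorem simple_fibre_affgebra_hom_const_or_injective
    {F : Type*} [Field F] (h2 : (2 : F) ≠ 0)
    {g : Type*} [LieRing g] [LieAlgebra F g] [LieAlgebra.IsSimple F g]
    {g' : Type*} [LieRing g'] [LieAlgebra F g']
    (k l : g →ₗ[F] g) (k' l' : g' →ₗ[F] g')
    (hkl : ∀ a b : g, l ⁅a, b⁆ = ⁅l a, b⁆ - ⁅a, k b⁆ + ⁅a, l b⁆)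
    (hkl' : ∀ x y : g', l' ⁅x, y⁆ = ⁅l' x, y⁆ - ⁅x, k' y⁆ + ⁅x, l' y⁆)
    (s : g) (s' : g')
    (br : g → g → g)
    (hbr : ∀ a b : g, br a b = ⁅a, b⁆ + k a + l (b - a) + s)
    (br' : g' → g' → g')
    (hbr' : ∀ x y : g', br' x y = ⁅x, y⁆ + k' x + l' (y - x) + s')
    (ψ : g →ₗ[F] g') (c : g') (φ : g → g')
    (hφ : ∀ a : g, φ a = ψ a + c)
    (hhom : ∀ a b : g, φ (br a b) = br' (φ a) (φ b)) :
    (∃ y : g', ∀ a : g, φ a = y) ∨ Function.Injective φ :=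
  simple_fibre_affgebra_hom_const_or_injective_general k l k' l' s s' br hbr br' hbr' ψ c φ hφ hhom
end

section
/- Let F be a field of characteristic ≠ 2, g a Lie algebra over F, κ, λ : g → g linear maps satisfying condition (kl), s ∈ g, and {a,b} := ⁅a,b⁆ + κ(a) + λ(b − a) + s the associated affine Lie bracket. Let h be a vector subspace of g and a ∈ g. Then {a + v, a + w} ∈ a + h for all v, w ∈ h if and only if h is a Lie subalgebra of g (i.e. ⁅v,w⁆ ∈ h for all v, w ∈ h) and the following hold: (a) κ(a) − a + s ∈ h; (b) κ(h) ⊆ h; (c) λ(v) + ⁅a, v⁆ ∈ h for all v ∈ h. -/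
/-- Proposition 3.10: the coset `a + h` of a vector subspace `h` of `g` is
closed under the affine bracket `{x,y} = ⁅x,y⁆ + k x + l (y - x) + s` if and
only if `h` is a Lie subalgebra and (a) `k a - a + s ∈ h`, (b) `k(h) ⊆ h`,
(c) `(l + ad_a)(h) ⊆ h`. -/
theorem coset_subaffgebra_characterisation
    {F : Type*} [Field F] (h2 : (2 : F) ≠ 0)
    {g : Type*} [LieRing g] [LieAlgebra F g]
    (k l : g →ₗ[F] g)
    (hkl : ∀ a b : g, l ⁅a, b⁆ = ⁅l a, b⁆ - ⁅a, k b⁆ + ⁅a, l b⁆)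
    (s : g) (br : g → g → g)
    (hbr : ∀ a b : g, br a b = ⁅a, b⁆ + k a + l (b - a) + s)
    (h : Submodule F g) (a : g) :
    (∀ v ∈ h, ∀ w ∈ h, br (a + v) (a + w) - a ∈ h) ↔
      ((∀ v ∈ h, ∀ w ∈ h, ⁅v, w⁆ ∈ h) ∧
       k a - a + s ∈ h ∧
       (∀ v ∈ h, k v ∈ h) ∧
       (∀ v ∈ h, l v + ⁅a, v⁆ ∈ h)) := by
  have key : ∀ v w : g, br (a + v) (a + w) - a =
      ⁅v, w⁆ + (k a - a + s) + k v + (l w + ⁅a, w⁆) - (l v + ⁅a, v⁆) := by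
    intro v w
    rw [hbr]
    have : (a + w) - (a + v) = w - v := by abel
    rw [this, map_sub, map_add]
    simp only [lie_add, add_lie, lie_self]
    rw [← neg_neg ⁅v, a⁆, lie_skew]
    abel
  constructor
  · intro H
    have ha : k a - a + s ∈ h := by
      have := H 0 h.zero_mem 0 h.zero_mem
      rw [key] at this
      simpa using this
    have hc : ∀ w ∈ h, l w + ⁅a, w⁆ ∈ h := by
      intro w hw
      have h0 := H 0 h.zero_mem w hw
      rw [key, map_zero, map_zero] at h0
      simpa using h.sub_mem h0 ha
    have hb : ∀ v ∈ h, k v ∈ h := by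
      intro v hv
      have h0 := H v hv 0 h.zero_mem
      rw [key, map_zero] at h0
      have : ⁅v, (0:g)⁆ + (k a - a + s) + k v + ((0:g) + ⁅a, (0:g)⁆) - (l v + ⁅a, v⁆) ∈ h := h0
      simp only [lie_zero, zero_add, add_zero] at this
      have heq : k v = (k a - a + s + k v - (l v + ⁅a, v⁆)) + (l v + ⁅a, v⁆) - (k a - a + s) := by abel
      rw [heq]
      exact h.sub_mem (h.add_mem this (hc v hv)) ha
    refine ⟨?_, ha, hb, hc⟩
    intro v hv w hw
    have h0 := H v hv w hw
    rw [key] at h0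
    have heq : ⁅v, w⁆ = ((⁅v, w⁆ + (k a - a + s) + k v + (l w + ⁅a, w⁆) - (l v + ⁅a, v⁆))
        + (l v + ⁅a, v⁆) - (l w + ⁅a, w⁆) - k v - (k a - a + s)) := by abel
    rw [heq]
    exact h.sub_mem (h.sub_mem (h.sub_mem (h.add_mem h0 (hc v hv)) (hc w hw)) (hb v hv)) ha
  · rintro ⟨hsub, ha, hb, hc⟩ v hv w hw
    rw [key]
    exact h.sub_mem (h.add_mem (h.add_mem (h.add_mem (hsub v hv w hw) ha)
      (hb v hv)) (hc w hw)) (hc v hv)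
end

section
/- Let F be a field of characteristic ≠ 2 and let g be a finite-dimensional Lie algebra over F which is perfect (⁅g,g⁆ = g) and has trivial centre (Z(g) = 0). If κ, λ : g → g are linear maps satisfying condition (kl), then δ := λ − κ is a derivation of g, i.e. δ(⁅a,b⁆) = ⁅δ(a), b⁆ + ⁅a, δ(b)⁆ for all a, b ∈ g. -/
/-- Proposition 4.2(1): if `g` is a finite-dimensional perfect Lie algebra
with trivial centre and `k`, `l` satisfy condition (kl), then `d := l - k`
is a derivation of `g` (i.e. any Lie affgebra with such a fibre is of
derivation type). -/
theorem perfect_centreless_kl_gives_derivation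
    {F : Type*} [Field F] (h2 : (2 : F) ≠ 0)
    {g : Type*} [LieRing g] [LieAlgebra F g] [Module.Finite F g]
    (hperf : ⁅(⊤ : LieIdeal F g), (⊤ : LieIdeal F g)⁆ = ⊤)
    (hcent : LieAlgebra.center F g = ⊥)
    (k l : g →ₗ[F] g)
    (hkl : ∀ a b : g, l ⁅a, b⁆ = ⁅l a, b⁆ - ⁅a, k b⁆ + ⁅a, l b⁆)
    (d : g →ₗ[F] g) (hd : d = l - k) :
    ∀ a b : g, d ⁅a, b⁆ = ⁅d a, b⁆ + ⁅a, d b⁆ := by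
  -- Step 1: `k` is balanced: `⁅k a, b⁆ = ⁅a, k b⁆`.
  have hbal : ∀ a b : g, ⁅k a, b⁆ = ⁅a, k b⁆ := by
    intro a b
    have h1 := hkl a b
    have h2 := hkl b a
    rw [show ⁅b, a⁆ = -⁅a, b⁆ from (lie_skew b a).symm, map_neg, h1,
      show ⁅l b, a⁆ = -⁅a, l b⁆ from (lie_skew (l b) a).symm,
      show ⁅b, k a⁆ = -⁅k a, b⁆ from (lie_skew b (k a)).symm,
      show ⁅b, l a⁆ = -⁅l a, b⁆ from (lie_skew b (l a)).symm, ← sub_eq_zero] at h2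
    refine (sub_eq_zero.mp ?_).symm
    rw [← h2]; abel
  -- Step 2: `k ⁅b, c⁆ - ⁅k b, c⁆` is central.
  have hz : ∀ a b c : g, ⁅a, k ⁅b, c⁆ - ⁅k b, c⁆⁆ = 0 := by
    intro a b c
    have E : l ⁅a, ⁅b, c⁆⁆ = l ⁅⁅a, b⁆, c⁆ + l ⁅b, ⁅a, c⁆⁆ := by
      rw [← map_add, ← leibniz_lie]
    rw [hkl a ⁅b, c⁆, hkl ⁅a, b⁆ c, hkl b ⁅a, c⁆, hkl b c, hkl a b, hkl a c] at E
    simp only [lie_sub, sub_lie, lie_add, add_lie, lie_lie, hbal] at E ⊢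
    rw [← sub_eq_zero] at E
    have h' : -⁅a, k ⁅b, c⁆⁆ + ⁅a, ⁅b, k c⁆⁆ = 0 := by rw [← E]; abel
    rw [neg_add_eq_zero] at h'
    rw [h', sub_self]
  -- Step 3: triviality of the centre gives `k ⁅b, c⁆ = ⁅k b, c⁆`.
  have hk : ∀ b c : g, k ⁅b, c⁆ = ⁅k b, c⁆ := by
    intro b c
    have hmem : k ⁅b, c⁆ - ⁅k b, c⁆ ∈ LieAlgebra.center F g :=
      (LieModule.mem_maxTrivSubmodule F g g _).mpr (fun a => hz a b c)
    rw [hcent, LieSubmodule.mem_bot, sub_eq_zero] at hmem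
    exact hmem
  -- Step 4: conclude.
  subst hd
  intro a b
  simp only [LinearMap.sub_apply, map_sub, hkl a b, hk a b, sub_lie, lie_sub]
  abel
end

section
/- Let g be a finite-dimensional simple Lie algebra over ℂ, let c, c' ∈ ℂ and s, s' ∈ g, and consider the affine Lie brackets {a,b} := ⁅a,b⁆ + c·b + s and {a,b}' := ⁅a,b⁆ + c'·b + s' on g. Then there exists a bijection φ : g → g of the form φ(a) = ψ(a) + r with ψ : g → g linear and r ∈ g, satisfying φ({a,b}) = {φ(a), φ(b)}' for all a, b ∈ g, if and only if c = c' and there exists a Lie algebra automorphism Ψ of g with s' = Ψ(s). -/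
/-! A bracket-preserving affine bijection `a ↦ ψ a + r` sends `{a, 0} = s` to `{ψ a + r, r}'`,
which is independent of `a`; by surjectivity `r` is central, hence `0` since `g` is simple.
For a linear `ψ` the equation `ψ {a, b} = {ψ a, ψ b}'` then splits into its constant part
(`ψ s = s'`), its part linear in `b` (`c = c'`, as `ψ` is injective) and its bracket part. -/

namespace LieAlgebra

variable {R L : Type*} [CommRing R] [LieRing L] [LieAlgebra R L]

def affBracket (c : R) (s a b : L) : L := ⁅a, b⁆ + c • b + s

variable {c c' : R} {s s' : L}

lemma translation_mem_center {ψ : L →ₗ[R] L} {r : L}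
    (hsurj : Function.Surjective fun a => ψ a + r)
    (hψ : ∀ a b, ψ (affBracket c s a b) + r = affBracket c' s' (ψ a + r) (ψ b + r)) :
    r ∈ center R L := by
  intro x
  obtain ⟨a, rfl⟩ := hsurj x
  have ha := hψ a 0
  have h0 := hψ 0 0
  simp only [affBracket, lie_zero, smul_zero, add_zero, zero_add, map_zero, lie_self] at ha h0
  simpa using ha.symm.trans h0

lemma map_affBracket_iff [IsDomain R] [NoZeroSMulDivisors R L] [Nontrivial L] {ψ : L →ₗ[R] L}
    (hinj : Function.Injective ψ) :
    (∀ a b, ψ (affBracket c s a b) = affBracket c' s' (ψ a) (ψ b)) ↔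
      c = c' ∧ ψ s = s' ∧ ∀ a b, ψ ⁅a, b⁆ = ⁅ψ a, ψ b⁆ := by
  constructor
  · intro hψ
    have hs : ψ s = s' := by simpa [affBracket] using hψ 0 0
    have hc : c = c' := by
      obtain ⟨b, hb⟩ := exists_ne (0 : L)
      have h : c • ψ b = c' • ψ b := by simpa [affBracket, hs] using hψ 0 b
      exact smul_left_injective R ((map_ne_zero_iff ψ hinj).2 hb) h
    refine ⟨hc, hs, fun a b => ?_⟩
    simpa [affBracket, hs, hc] using hψ a b
  · rintro ⟨rfl, rfl, hlie⟩ a b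
    simp [affBracket, hlie]

end LieAlgebra

open LieAlgebra in
theorem simple_complex_affgebra_iso_iff_general
    {g : Type*} [LieRing g] [LieAlgebra ℂ g]
    [LieAlgebra.IsSimple ℂ g]
    (c c' : ℂ) (s s' : g)
    (br br' : g → g → g)
    (hbr : ∀ a b : g, br a b = ⁅a, b⁆ + c • b + s)
    (hbr' : ∀ a b : g, br' a b = ⁅a, b⁆ + c' • b + s') :
    (∃ (ψ : g →ₗ[ℂ] g) (r : g),
        Function.Bijective (fun a : g => ψ a + r) ∧
        ∀ a b : g, ψ (br a b) + r = br' (ψ a + r) (ψ b + r)) ↔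
    (c = c' ∧ ∃ Ψ : g ≃ₗ⁅ℂ⁆ g, s' = Ψ s) := by
  obtain rfl : br = affBracket c s := funext fun a => funext (hbr a)
  obtain rfl : br' = affBracket c' s' := funext fun a => funext (hbr' a)
  have : Nontrivial g := IsSimple.nontrivial ℂ g
  constructor
  · rintro ⟨ψ, r, hbij, hψ⟩
    obtain rfl : r = 0 := by simpa using translation_mem_center hbij.2 hψ
    simp only [add_zero] at hbij hψ
    obtain ⟨rfl, hs, hlie⟩ := (map_affBracket_iff hbij.1).1 hψ
    exact ⟨rfl, { LinearEquiv.ofBijective ψ hbij with map_lie' := hlie _ _ }, hs.symm⟩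
  · rintro ⟨rfl, Ψ, rfl⟩
    refine ⟨Ψ.toLinearMap, 0, by simpa using Ψ.bijective, fun a b => ?_⟩
    simp [affBracket, LieEquiv.map_lie]

/-- Proposition 4.2(2)(ii): for a finite-dimensional simple complex Lie
algebra `g`, the affgebras with brackets `{a,b} = ⁅a,b⁆ + c • b + s` and
`{a,b}' = ⁅a,b⁆ + c' • b + s'` are isomorphic (via an affine bijection) if
and only if `c = c'` and `s' = Ψ s` for a Lie algebra automorphism `Ψ` of `g`. -/
theorem simple_complex_affgebra_iso_iff
    {g : Type*} [LieRing g] [LieAlgebra ℂ g] [Module.Finite ℂ g]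
    [LieAlgebra.IsSimple ℂ g]
    (c c' : ℂ) (s s' : g)
    (br br' : g → g → g)
    (hbr : ∀ a b : g, br a b = ⁅a, b⁆ + c • b + s)
    (hbr' : ∀ a b : g, br' a b = ⁅a, b⁆ + c' • b + s') :
    (∃ (ψ : g →ₗ[ℂ] g) (r : g),
        Function.Bijective (fun a : g => ψ a + r) ∧
        ∀ a b : g, ψ (br a b) + r = br' (ψ a + r) (ψ b + r)) ↔
    (c = c' ∧ ∃ Ψ : g ≃ₗ⁅ℂ⁆ g, s' = Ψ s) :=
  simple_complex_affgebra_iso_iff_general c c' s s' br br' hbr hbr'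
end

section
/- Let F be a field of characteristic ≠ 2 and let g be a finite-dimensional Lie algebra over F in which every abelian Lie subalgebra has dimension at most 1 (i.e. every Lie subalgebra h of g with ⁅x,y⁆ = 0 for all x, y ∈ h satisfies dim h ≤ 1). If κ, λ : g → g are linear maps satisfying condition (kl), then κ is a scalar multiple of the identity: there exists c ∈ F with κ(x) = c·x for all x ∈ g. -/
/-- A linear endomorphism for which every vector is an eigenvector is a scalar
multiple of the identity. -/
lemma aux_forall_eigen_scalar {F : Type*} [Field F] {M : Type*} [AddCommGroup M]
    [Module F M] (f : M →ₗ[F] M) (h : ∀ x : M, ∃ c : F, f x = c • x) :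
    ∃ c : F, ∀ x : M, f x = c • x := by
  by_cases hM : ∀ x : M, x = 0
  · exact ⟨0, fun x => by rw [hM x]; simp⟩
  push_neg at hM
  obtain ⟨x0, hx0⟩ := hM
  obtain ⟨c0, hc0⟩ := h x0
  refine ⟨c0, fun y => ?_⟩
  obtain ⟨c, hc⟩ := h y
  by_cases hy : ∃ a : F, y = a • x0
  · obtain ⟨a, rfl⟩ := hy
    rw [map_smul, hc0, smul_comm]
  · push_neg at hy
    obtain ⟨c', hc'⟩ := h (x0 + y)
    rw [map_add, hc0, hc, smul_add] at hc'
    have key : (c0 - c') • x0 = (c' - c) • y := by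
      rw [sub_smul, sub_smul]
      linear_combination (norm := module) hc'
    have hcc : c' = c := by
      by_contra hne
      refine hy ((c' - c)⁻¹ * (c0 - c')) ?_
      rw [mul_smul, key, smul_smul, inv_mul_cancel₀ (sub_ne_zero.mpr hne), one_smul]
    rw [hcc, sub_self, zero_smul] at key
    have hc0c : c0 = c := sub_eq_zero.mp ((smul_eq_zero.mp key).resolve_right hx0)
    rw [hc, hc0c]

/-- Proposition 4.5: if every abelian Lie subalgebra of a finite-dimensional
Lie algebra `g` has dimension at most `1`, then any `k` appearing in a pair
`(k, l)` satisfying condition (kl) is a scalar multiple of the identity. -/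
theorem no_abelian_subalgebra_kappa_scalar
    {F : Type*} [Field F] (h2 : (2 : F) ≠ 0)
    {g : Type*} [LieRing g] [LieAlgebra F g] [Module.Finite F g]
    (habel : ∀ h : LieSubalgebra F g,
      (∀ x ∈ h, ∀ y ∈ h, ⁅x, y⁆ = (0 : g)) → Module.finrank F h ≤ 1)
    (k l : g →ₗ[F] g)
    (hkl : ∀ a b : g, l ⁅a, b⁆ = ⁅l a, b⁆ - ⁅a, k b⁆ + ⁅a, l b⁆) :
    ∃ c : F, ∀ x : g, k x = c • x := by
  -- Step 1: symmetry of k w.r.t. the bracket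
  have hsym : ∀ a b : g, ⁅k a, b⁆ = ⁅a, k b⁆ := by
    intro a b
    have h1 := hkl a b
    have h2' := hkl b a
    have e0 : ⁅b, a⁆ = -⁅a, b⁆ := neg_eq_iff_eq_neg.mp (lie_skew a b)
    have e1 : ⁅l b, a⁆ = -⁅a, l b⁆ := neg_eq_iff_eq_neg.mp (lie_skew a (l b))
    have e2 : ⁅b, l a⁆ = -⁅l a, b⁆ := neg_eq_iff_eq_neg.mp (lie_skew (l a) b)
    have e3 : ⁅b, k a⁆ = -⁅k a, b⁆ := neg_eq_iff_eq_neg.mp (lie_skew (k a) b)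
    rw [e0, map_neg, e1, e2, e3] at h2'
    linear_combination (norm := module) -h1 - h2' 
  -- Step 2: ⁅x, k x⁆ = 0
  have hbr : ∀ x : g, ⁅x, k x⁆ = 0 := by
    intro x
    have h1 : ⁅k x, x⁆ = ⁅x, k x⁆ := hsym x x
    have h1' : ⁅k x, x⁆ = -⁅x, k x⁆ := neg_eq_iff_eq_neg.mp (lie_skew x (k x))
    have h3 : (2 : F) • ⁅x, k x⁆ = 0 := by
      rw [two_smul]
      exact eq_neg_iff_add_eq_zero.mp (h1.symm.trans h1')
    exact (smul_eq_zero.mp h3).resolve_left h2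
  -- Step 3: every vector is an eigenvector of k
  have heig : ∀ x : g, ∃ c : F, k x = c • x := by
    intro x
    by_cases hx0 : x = 0
    · exact ⟨0, by rw [hx0]; simp⟩
    by_contra hcon
    push_neg at hcon
    have hnmem : k x ∉ Submodule.span F {x} := by
      intro hmem
      obtain ⟨c, hc⟩ := Submodule.mem_span_singleton.mp hmem
      exact hcon c hc.symm
    -- x and k x are linearly independent
    have hli : LinearIndependent F ![x, k x] := by
      rw [LinearIndependent.pair_iff' hx0]
      intro a ha
      exact hnmem (ha ▸ Submodule.smul_mem _ a (Submodule.mem_span_singleton_self x))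
    -- the span of {x, k x} is an abelian Lie subalgebra
    set s : Set g := {x, k x} with hs
    have hbase : ∀ a ∈ s, ∀ b ∈ s, ⁅a, b⁆ = (0 : g) := by
      intro a ha b hb
      simp only [hs, Set.mem_insert_iff, Set.mem_singleton_iff] at ha hb
      rcases ha with rfl | rfl <;> rcases hb with rfl | rfl <;>
        first
          | exact lie_self _
          | exact hbr _
          | exact (hsym _ _).trans (hbr _)
    have habS : ∀ a ∈ Submodule.span F s, ∀ b ∈ Submodule.span F s, ⁅a, b⁆ = (0 : g) := by
      intro a ha b hb
      induction ha, hb using Submodule.span_induction₂ with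
      | mem_mem u v hu hv => exact hbase u hu v hv
      | zero_left v hv => simp
      | zero_right u hu => simp
      | add_left u v w hu hv hw h1 h2 => rw [add_lie, h1, h2, add_zero]
      | add_right u v w hu hv hw h1 h2 => rw [lie_add, h1, h2, add_zero]
      | smul_left r u v hu hv h1 => rw [smul_lie, h1, smul_zero]
      | smul_right r u v hu hv h1 => rw [lie_smul, h1, smul_zero]
    let S : LieSubalgebra F g :=
      { Submodule.span F s with
        lie_mem' := fun {a b} ha hb => by
          rw [habS a ha b hb]; exact Submodule.zero_mem _ }
    have hS1 : Module.finrank F S ≤ 1 := habel S (fun a ha b hb => habS a ha b hb)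
    -- but S has dimension 2
    have hrange : Set.range ![x, k x] = s := by
      simp only [hs, Matrix.range_cons, Matrix.range_empty, Set.union_empty,
        Set.union_singleton]
      rw [Set.pair_comm]
    have hS2 : Module.finrank F (Submodule.span F s) = 2 := by
      have := finrank_span_eq_card hli
      rw [hrange] at this
      simpa using this
    have : Module.finrank F S = 2 := hS2
    omega
  exact aux_forall_eigen_scalar k heig
end

section
/- Let F be a field of characteristic ≠ 2, g a Lie algebra over F, κ, λ : g → g linear maps satisfying condition (kl), s ∈ g, δ := λ − κ, and {a,b} := ⁅a,b⁆ + κ(a) + λ(b − a) + s the associated affine Lie bracket. Let π : g × g → F be a bilinear form, ρ, σ : g → F linear forms, τ ∈ F, and define ω : g × g → F by ω(a,b) := π(a,b) + ρ(a) + σ(b) + τ. Then ω satisfies both conditions (antisym.coc): ω(a,b) − ω(a,a) + ω(b,a) = ω(b,b) for all a, b ∈ g, and (Jacobi.coc): ω(a,{b,c}) − ω(a,{a,a}) + ω(b,{c,a}) − ω(b,{b,b}) + ω(c,{a,b}) − ω(c,{c,c}) = 0 for all a, b, c ∈ g, if and only if π is alternating (π(a,a) = 0 for all a), π is a 2-cocycle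 (π(a,⁅b,c⁆) + π(b,⁅c,a⁆) + π(c,⁅a,b⁆) = 0 for all a, b, c), and σ(⁅a,b⁆) = π(a, δ(b)) + π(λ(a), b) for all a, b ∈ g. -/
/-- Proposition 6.2: a bi-affine map `ω(a,b) = π(a,b) + ρ(a) + σ(b) + τ`
satisfies the affine-antisymmetry and affine-Jacobi cocycle conditions with
respect to the affine bracket `{a,b} = ⁅a,b⁆ + k a + l (b - a) + s` if and
only if `π` is an alternating 2-cocycle on `g` and
`σ(⁅a,b⁆) = π(a, d b) + π(l a, b)`, where `d = l - k`. -/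
theorem affine_cocycle_characterisation
    {F : Type*} [Field F] (h2 : (2 : F) ≠ 0)
    {g : Type*} [LieRing g] [LieAlgebra F g]
    (k l : g →ₗ[F] g)
    (hkl : ∀ a b : g, l ⁅a, b⁆ = ⁅l a, b⁆ - ⁅a, k b⁆ + ⁅a, l b⁆)
    (s : g) (br : g → g → g)
    (hbr : ∀ a b : g, br a b = ⁅a, b⁆ + k a + l (b - a) + s)
    (d : g →ₗ[F] g) (hd : d = l - k)
    (π : g →ₗ[F] g →ₗ[F] F) (ρ σ : g →ₗ[F] F) (τ : F)
    (ω : g → g → F)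
    (hω : ∀ a b : g, ω a b = π a b + ρ a + σ b + τ) :
    ((∀ a b : g, ω a b - ω a a + ω b a = ω b b) ∧
     (∀ a b c : g,
        ω a (br b c) - ω a (br a a) + ω b (br c a) - ω b (br b b)
          + ω c (br a b) - ω c (br c c) = 0)) ↔
    ((∀ a : g, π a a = 0) ∧
     (∀ a b c : g, π a ⁅b, c⁆ + π b ⁅c, a⁆ + π c ⁅a, b⁆ = 0) ∧
     (∀ a b : g, σ ⁅a, b⁆ = π a (d b) + π (l a) b)) := by
  subst hd
  simp only [hω, hbr, LinearMap.sub_apply]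
  constructor
  · rintro ⟨hA, hJ⟩
    have hAlt : ∀ a : g, π a a = 0 := by
      intro a
      have h1 := hA a 0
      simp only [map_zero, LinearMap.zero_apply] at h1
      linear_combination -h1
    have hanti : ∀ x y : g, π x y = - π y x := by
      intro x y
      have h1 := hAlt (x + y)
      simp only [map_add, LinearMap.add_apply] at h1
      linear_combination h1 - hAlt x - hAlt y
    have hpk : ∀ a : g, π a (k a) = 0 := by
      intro a
      have h1 := hJ a 0 0
      simp only [lie_self, zero_lie, lie_zero, sub_zero, zero_sub, sub_self,
        map_zero, map_neg, map_add, map_sub, LinearMap.zero_apply, zero_add, add_zero] at h1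
      linear_combination -h1
    have hσ' : ∀ a b : g, σ ⁅a, b⁆ = π a (l b) - π a (k b) + π (l a) b := by
      intro a b
      have h1 := hJ a b 0
      simp only [lie_self, zero_lie, lie_zero, sub_zero, zero_sub, sub_self,
        map_zero, map_neg, map_add, map_sub, LinearMap.zero_apply, zero_add, add_zero] at h1
      linear_combination h1 + hpk a + hpk b - hanti (l a) b
    refine ⟨hAlt, ?_, ?_⟩
    · intro a b c
      have h1 := hJ a b c
      simp only [lie_self, sub_self, map_zero, map_add, map_sub, zero_add, add_zero] at h1
      linear_combination h1 - hσ' b c - hσ' c a - hσ' a b + hpk a + hpk b + hpk c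
        - hanti (l b) c - hanti (l c) a - hanti (l a) b
    · intro a b
      simp only [map_sub]
      linear_combination hσ' a b
  · rintro ⟨hAlt, hcoc, hσ⟩
    have hσ' : ∀ a b : g, σ ⁅a, b⁆ = π a (l b) - π a (k b) + π (l a) b := by
      intro a b
      have h1 := hσ a b
      simp only [map_sub] at h1
      linear_combination h1
    have hanti : ∀ x y : g, π x y = - π y x := by
      intro x y
      have h1 := hAlt (x + y)
      simp only [map_add, LinearMap.add_apply] at h1
      linear_combination h1 - hAlt x - hAlt y
    have hpk : ∀ a : g, π a (k a) = 0 := by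
      intro a
      have h1 := hσ' a a
      simp only [lie_self, map_zero] at h1
      linear_combination h1 + hanti a (l a)
    constructor
    · intro a b
      linear_combination hanti a b - hAlt a - hAlt b
    · intro a b c
      simp only [lie_self, sub_self, map_zero, map_add, map_sub, zero_add, add_zero]
      linear_combination hcoc a b c + hσ' b c + hσ' c a + hσ' a b - hpk a - hpk b - hpk c
        + hanti (l b) c + hanti (l c) a + hanti (l a) b
end

section
/- Let F be a field of characteristic ≠ 2, g a Lie algebra over F, κ, λ : g → g linear maps satisfying condition (kl), s ∈ g, and {a,b} := ⁅a,b⁆ + κ(a) + λ(b − a) + s the associated affine Lie bracket. Let ω : g × g → F be of the form ω(a,b) = π(a,b) + ρ(a) + σ(b) + τ with π bilinear, ρ, σ linear and τ ∈ F, and suppose ω satisfies: ω(a,b) − ω(a,a) + ω(b,a) = ω(b,b) for all a, b ∈ g, and ω(a,{b,c}) − ω(a,{a,a}) + ω(b,{c,a}) − ω(b,{b,b}) + ω(c,{a,b}) − ω(c,{c,c}) = 0 for all a, b, c ∈ g. Then the bracket on g × F defined by {(a,α),(b,β)}₀ := ({a,b}, ω(a,b)) satisfies the affine antisymmetry {(a,α),(b,β)}₀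 − {(a,α),(a,α)}₀ + {(b,β),(a,α)}₀ = {(b,β),(b,β)}₀ and the affine Jacobi identity {x,{y,z}₀}₀ − {x,{x,x}₀}₀ + {y,{z,x}₀}₀ − {y,{y,y}₀}₀ + {z,{x,y}₀}₀ − {z,{z,z}₀}₀ = 0 for all x, y, z ∈ g × F. -/
private lemma br_jacobi {F : Type*} [Field F] {g : Type*} [LieRing g] [LieAlgebra F g]
    (k l : g →ₗ[F] g)
    (hkl : ∀ a b : g, l ⁅a, b⁆ = ⁅l a, b⁆ - ⁅a, k b⁆ + ⁅a, l b⁆)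
    (s : g) (br : g → g → g)
    (hbr : ∀ a b : g, br a b = ⁅a, b⁆ + k a + l (b - a) + s)
    (a b c : g) :
    br a (br b c) - br a (br a a) + br b (br c a) - br b (br b b)
      + br c (br a b) - br c (br c c) = 0 := by
  have hka : ∀ x : g, ⁅x, k x⁆ = 0 := by
    intro x
    have h := hkl x x
    rw [lie_self, map_zero, ← lie_skew x (l x)] at h
    linear_combination (norm := abel) h
  have jac := lie_jacobi a b c
  simp only [hbr, map_add, map_sub, lie_add, add_lie, lie_sub, sub_lie, lie_self,
    sub_self, map_zero, lie_zero, hkl,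
    ← lie_skew (l a) b, ← lie_skew (l b) c, ← lie_skew (l c) a, hka]
  linear_combination (norm := abel) jac

private lemma br_anti {F : Type*} [Field F] {g : Type*} [LieRing g] [LieAlgebra F g]
    (k l : g →ₗ[F] g) (s : g) (br : g → g → g)
    (hbr : ∀ a b : g, br a b = ⁅a, b⁆ + k a + l (b - a) + s)
    (a b : g) : br a b - br a a + br b a = br b b := by
  simp only [hbr, map_sub, sub_self, map_zero, lie_self, ← lie_skew a b]
  abel

/-- Lemma 6.1: if `ω(a,b) = π(a,b) + ρ(a) + σ(b) + τ` satisfies the cocycle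
conditions with respect to the affine bracket `{a,b} = ⁅a,b⁆ + k a + l (b-a) + s`,
then the bracket `{(a,α),(b,β)}₀ = ({a,b}, ω(a,b))` on `g × F` satisfies the
affine antisymmetry and the affine Jacobi identity, yielding the cocycle
extension of the Lie affgebra. -/
theorem cocycle_extension_is_lie_affgebra
    {F : Type*} [Field F] (h2 : (2 : F) ≠ 0)
    {g : Type*} [LieRing g] [LieAlgebra F g]
    (k l : g →ₗ[F] g)
    (hkl : ∀ a b : g, l ⁅a, b⁆ = ⁅l a, b⁆ - ⁅a, k b⁆ + ⁅a, l b⁆)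
    (s : g) (br : g → g → g)
    (hbr : ∀ a b : g, br a b = ⁅a, b⁆ + k a + l (b - a) + s)
    (π : g →ₗ[F] g →ₗ[F] F) (ρ σ : g →ₗ[F] F) (τ : F)
    (ω : g → g → F)
    (hω : ∀ a b : g, ω a b = π a b + ρ a + σ b + τ)
    (hanti : ∀ a b : g, ω a b - ω a a + ω b a = ω b b)
    (hjac : ∀ a b c : g,
      ω a (br b c) - ω a (br a a) + ω b (br c a) - ω b (br b b)
        + ω c (br a b) - ω c (br c c) = 0)
    (brP : g × F → g × F → g × F)
    (hbrP : ∀ x y : g × F, brP x y = (br x.1 y.1, ω x.1 y.1)) :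
    (∀ x y : g × F, brP x y - brP x x + brP y x = brP y y) ∧
    (∀ x y z : g × F,
      brP x (brP y z) - brP x (brP x x) + brP y (brP z x) - brP y (brP y y)
        + brP z (brP x y) - brP z (brP z z) = 0) := by
  constructor
  · intro x y
    simp only [hbrP, Prod.mk_sub_mk, Prod.mk_add_mk, Prod.mk.injEq]
    exact ⟨br_anti k l s br hbr x.1 y.1, hanti x.1 y.1⟩
  · intro x y z
    simp only [hbrP, Prod.mk_sub_mk, Prod.mk_add_mk, Prod.ext_iff, Prod.fst_zero,
      Prod.snd_zero]
    exact ⟨br_jacobi k l hkl s br hbr x.1 y.1 z.1, hjac x.1 y.1 z.1⟩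
end

section
/- Let n ≥ 2 be an integer and F a field of characteristic p with p ≠ 2 and p dividing n + 1. Let E denote the (n+1)×(n+1) matrix over F all of whose entries equal 1, and let sl₀(n,F) denote the set of (n+1)×(n+1) matrices X over F with XE = EX = 0 and trace X = 0, which is a Lie subalgebra of the matrix Lie algebra gl(n+1,F) under the commutator bracket. Then E is a nonzero central element of sl₀(n,F), and sl₀(n,F) is not isomorphic as a Lie algebra over F to sl(n,F), the Lie algebra of trace-zero n×n matrices over F. -/
attribute [local instance 100] LieRing.ofAssociativeRing

/-!
In `F` we have `n + 1 = 0`, so `E² = (n + 1) E = 0` and `tr E = n + 1 = 0`: thus `E ∈ sl₀`, and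
it is central there because `XE = EX = 0` on `sl₀`. On the other side `n = -1 ≠ 0` in `F`, and a
trace-zero matrix commuting with every elementary matrix `e_ij` (`i ≠ j`) is scalar, hence zero;
so `sl(n, F)` has trivial centre, unlike `sl₀`.
-/

namespace Matrix

variable {ι R : Type*} [Fintype ι]

theorem mul_self_of_forall_eq_one [NonAssocSemiring R] {E : Matrix ι ι R}
    (hE : ∀ i j, E i j = 1) : E * E = (Fintype.card ι : R) • E := by
  ext i j
  simp [mul_apply, hE]

theorem trace_of_forall_eq_one [AddCommMonoidWithOne R] {E : Matrix ι ι R}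
    (hE : ∀ i j, E i j = 1) : E.trace = Fintype.card ι := by
  simp [trace, hE]

theorem eq_zero_of_trace_eq_zero_of_commute_single [DecidableEq ι] [CommRing R] [NoZeroDivisors R]
    (hι : (Fintype.card ι : R) ≠ 0) {X : Matrix ι ι R} (htr : X.trace = 0)
    (hX : ∀ i j, i ≠ j → Commute X (single i j 1)) : X = 0 := by
  have hoff : ∀ i k, k ≠ i → X k i = 0 := fun i k hki => by
    simpa [mul_single_apply_same, single_mul_apply_of_ne _ _ _ _ _ hki]
      using congr_fun₂ (hX i k hki.symm).eq k k
  have hdiag : ∀ i j, X i i = X j j := fun i j => by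
    rcases eq_or_ne i j with rfl | hij
    · rfl
    · simpa using congr_fun₂ (hX i j hij).eq i j
  have hdiag_zero : ∀ i, X i i = 0 := fun i => by
    have : (Fintype.card ι : R) * X i i = 0 := by
      rw [← htr, trace, ← Finset.card_univ, ← nsmul_eq_mul, ← Finset.sum_const]
      exact Finset.sum_congr rfl fun j _ => (hdiag j i).symm
    exact (mul_eq_zero.mp this).resolve_left hι
  ext k l
  rcases eq_or_ne k l with rfl | hkl
  · exact hdiag_zero k
  · exact hoff l k hkl

end Matrix

namespace LieAlgebra

variable {R : Type*} [CommRing R]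

theorem SpecialLinear.center_eq_bot {ι : Type*} [Fintype ι] [DecidableEq ι] [NoZeroDivisors R]
    (hι : (Fintype.card ι : R) ≠ 0) : center R (SpecialLinear.sl ι R) = ⊥ := by
  refine (LieSubmodule.eq_bot_iff _).mpr fun Z hZ => Subtype.ext ?_
  refine Matrix.eq_zero_of_trace_eq_zero_of_commute_single hι Z.2 fun i j hij => ?_
  have h := congrArg Subtype.val (hZ (single i j hij 1))
  rw [sl_bracket, val_single] at h
  exact (sub_eq_zero.mp h).symm

variable {L L' : Type*} [LieRing L] [LieAlgebra R L] [LieRing L'] [LieAlgebra R L']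

theorem _root_.LieEquiv.map_mem_center (e : L ≃ₗ⁅R⁆ L') {x : L} (hx : x ∈ center R L) :
    e x ∈ center R L' := by
  intro y
  rw [← e.apply_symm_apply y, ← LieEquiv.map_lie, hx, map_zero]

end LieAlgebra

theorem sl0_not_isomorphic_to_sl_general
    (n : ℕ)
    {F : Type*} [Field F] (p : ℕ) [CharP F p]
    (hpn : p ∣ n + 1)
    (E : Matrix (Fin (n + 1)) (Fin (n + 1)) F)
    (hE : ∀ i j, E i j = 1)
    (sl₀ : LieSubalgebra F (Matrix (Fin (n + 1)) (Fin (n + 1)) F))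
    (hsl₀ : ∀ X : Matrix (Fin (n + 1)) (Fin (n + 1)) F,
      X ∈ sl₀ ↔ X * E = 0 ∧ E * X = 0 ∧ X.trace = 0) :
    E ≠ 0 ∧ E ∈ sl₀ ∧ (∀ X ∈ sl₀, ⁅E, X⁆ = 0) ∧
      IsEmpty (↥sl₀ ≃ₗ⁅F⁆ ↥(LieAlgebra.SpecialLinear.sl (Fin n) F)) := by
  have hcard : (Fintype.card (Fin (n + 1)) : F) = 0 := by
    simpa using (CharP.cast_eq_zero_iff F p (n + 1)).mpr hpn
  have hEE : E * E = 0 := by rw [Matrix.mul_self_of_forall_eq_one hE, hcard, zero_smul]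
  have hE0 : E ≠ 0 := fun h => one_ne_zero (α := F) (by simpa [h] using hE 0 0)
  have hEmem : E ∈ sl₀ :=
    (hsl₀ E).mpr ⟨hEE, hEE, by rw [Matrix.trace_of_forall_eq_one hE, hcard]⟩
  have hcentral : ∀ X ∈ sl₀, ⁅E, X⁆ = 0 := fun X hX => by
    obtain ⟨hXE, hEX, -⟩ := (hsl₀ X).mp hX
    rw [Ring.lie_def, hEX, hXE, sub_zero]
  refine ⟨hE0, hEmem, hcentral, ⟨fun φ => hE0 ?_⟩⟩
  have hcenter : (⟨E, hEmem⟩ : sl₀) ∈ LieAlgebra.center F sl₀ :=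
    fun X => Subtype.ext <| by
      rw [LieSubalgebra.coe_bracket, ← lie_skew, hcentral X.1 X.2, neg_zero]
      rfl
  have hn : (Fintype.card (Fin n) : F) ≠ 0 := by
    rw [Fintype.card_fin, Nat.cast_succ] at hcard
    rw [Fintype.card_fin, eq_neg_of_add_eq_zero_left hcard]
    exact neg_ne_zero.mpr one_ne_zero
  have hφE : φ ⟨E, hEmem⟩ = 0 := by
    simpa [LieAlgebra.SpecialLinear.center_eq_bot hn] using φ.map_mem_center hcenter
  simpa using congrArg Subtype.val (φ.injective (hφE.trans φ.map_zero.symm))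

/-- Section 5 (equation (5.1), key Lie-algebraic claim): for `n ≥ 2` and a
field `F` of characteristic `p` with `p ≠ 2`, `p > 0` and `p ∣ n + 1`, the
all-ones `(n+1)×(n+1)` matrix `E` is a nonzero central element of the Lie
algebra `sl₀(n,F) = {X ∈ gl(n+1,F) : XE = EX = 0, tr X = 0}`, and hence
`sl₀(n,F)` is not isomorphic to `sl(n,F)` as a Lie algebra over `F`. -/
theorem sl0_not_isomorphic_to_sl
    (n : ℕ) (hn : 2 ≤ n)
    {F : Type*} [Field F] (p : ℕ) [CharP F p]
    (hp0 : p ≠ 0) (hp2 : p ≠ 2) (hpn : p ∣ n + 1)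
    (E : Matrix (Fin (n + 1)) (Fin (n + 1)) F)
    (hE : ∀ i j, E i j = 1)
    (sl₀ : LieSubalgebra F (Matrix (Fin (n + 1)) (Fin (n + 1)) F))
    (hsl₀ : ∀ X : Matrix (Fin (n + 1)) (Fin (n + 1)) F,
      X ∈ sl₀ ↔ X * E = 0 ∧ E * X = 0 ∧ X.trace = 0) :
    E ≠ 0 ∧ E ∈ sl₀ ∧ (∀ X ∈ sl₀, ⁅E, X⁆ = 0) ∧
      IsEmpty (↥sl₀ ≃ₗ⁅F⁆ ↥(LieAlgebra.SpecialLinear.sl (Fin n) F)) :=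
  sl0_not_isomorphic_to_sl_general n p hpn E hE sl₀ hsl₀
end
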